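/- arXiv:2103.02226 — 3 statements merged into one kernel-verified Lean document; each statement's English description precedes it below -/
import Mathlib

section
/- Fix N ∈ ℕ with N ≥ 1, and for each i ∈ {1, …, N} fix dimensions p_i, r_i ∈ ℕ and a symmetric matrix X̲_i ∈ ℝ^{(p_i+r_i)×(p_i+r_i)} with conformal block partition X̲_i = [[X̲_i^{11}, X̲_i^{12}], [X̲_i^{21}, X̲_i^{22}]], X̲_i^{11} ∈ ℝ^{p_i×p_i}, X̲_i^{22} ∈ ℝ^{r_i×r_i}. Set p̃ = Σ_i p_i, r̃ = Σ_i r_i, and let X̲^{comp} ∈ ℝ^{(p̃+r̃)×(p̃+r̃)} be the block matrix whose four p̃×p̃, p̃×r̃, r̃×p̃ and r̃×r̃ blocks are the block-diagonal arrangements of (X̲_i^{11})_i, (X̲_i^{12})_i, (X̲_i^{21})_i and (X̲_i^{22})_i respectively. Let M ∈ ℝ^{p̃×r̃} and suppose the symmetric matrix [M; I_{r̃}]ᵀ X̲^{comp} [M; I_{r̃}] ∈ ℝ^{r̃×r̃} is negative semidefinite. Then for every choice of vectors y_i ∈ ℝ^{r_i}, i ∈ {1, …, N}, writing y = [y_1;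 …; y_N] ∈ ℝ^{r̃} and partitioning w := M y ∈ ℝ^{p̃} conformally as w = [w_1; …; w_N] with w_i ∈ ℝ^{p_i}, one has Σ_{i=1}^N [w_i; y_i]ᵀ X̲_i [w_i; y_i] ≤ 0. -/
open Matrix

lemma bd_dot {N : ℕ} {m n : Fin N → ℕ} (X : ∀ i, Matrix (Fin (m i)) (Fin (n i)) ℝ)
    (u : (Σ i, Fin (m i)) → ℝ) (v : (Σ i, Fin (n i)) → ℝ) :
    u ⬝ᵥ (Matrix.blockDiagonal' X *ᵥ v)
      = ∑ i, (fun j => u ⟨i, j⟩) ⬝ᵥ (X i *ᵥ fun j => v ⟨i, j⟩) := by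
  simp only [dotProduct, Matrix.mulVec]
  rw [← Finset.univ_sigma_univ, Finset.sum_sigma]
  refine Finset.sum_congr rfl fun i _ => ?_
  refine Finset.sum_congr rfl fun j _ => ?_
  congr 1
  rw [← Finset.univ_sigma_univ, Finset.sum_sigma]
  rw [Finset.sum_eq_single i]
  · simp
  · intro a _ ha
    simp [Matrix.blockDiagonal'_apply_ne _ _ _ (Ne.symm ha)]
  · simp

lemma sum_elim_dot {a b : Type*} [Fintype a] [Fintype b] (u c : a → ℝ) (v d : b → ℝ) :
    Sum.elim u v ⬝ᵥ Sum.elim c d = u ⬝ᵥ c + v ⬝ᵥ d := by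
  simp [dotProduct, Fintype.sum_sum_type]

/-- Key algebraic lemma underlying Theorem 2 of the paper: if the LMI compositionality
condition `[M; I]ᵀ X̲ᶜᵒᵐᵖ [M; I] ⪯ 0` holds, then along the interconnection constraint
`w = M y` the sum of the local supply-rate quadratic forms is nonpositive. -/
theorem lmi_implies_sum_quadform_nonpos {N : ℕ} (hN : 1 ≤ N) (p r : Fin N → ℕ)
    (X11 : ∀ i, Matrix (Fin (p i)) (Fin (p i)) ℝ)
    (X12 : ∀ i, Matrix (Fin (p i)) (Fin (r i)) ℝ)
    (X21 : ∀ i, Matrix (Fin (r i)) (Fin (p i)) ℝ)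
    (X22 : ∀ i, Matrix (Fin (r i)) (Fin (r i)) ℝ)
    (hsymm : ∀ i, (Matrix.fromBlocks (X11 i) (X12 i) (X21 i) (X22 i)).IsSymm)
    (M : Matrix (Σ i, Fin (p i)) (Σ i, Fin (r i)) ℝ)
    (hlmi : ∀ z : (Σ i, Fin (r i)) → ℝ,
      z ⬝ᵥ (((Matrix.fromRows M (1 : Matrix (Σ i, Fin (r i)) (Σ i, Fin (r i)) ℝ))ᵀ *
          Matrix.fromBlocks (Matrix.blockDiagonal' X11) (Matrix.blockDiagonal' X12)
            (Matrix.blockDiagonal' X21) (Matrix.blockDiagonal' X22) *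
          Matrix.fromRows M (1 : Matrix (Σ i, Fin (r i)) (Σ i, Fin (r i)) ℝ)) *ᵥ z) ≤ 0) :
    ∀ y : ∀ i, Fin (r i) → ℝ,
      ∑ i : Fin N,
          Sum.elim (fun j => (M *ᵥ fun s : Σ i, Fin (r i) => y s.1 s.2) ⟨i, j⟩) (y i) ⬝ᵥ
            (Matrix.fromBlocks (X11 i) (X12 i) (X21 i) (X22 i) *ᵥ
              Sum.elim (fun j => (M *ᵥ fun s : Σ i, Fin (r i) => y s.1 s.2) ⟨i, j⟩) (y i))
        ≤ 0 := by
  intro y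
  set z : (Σ i, Fin (r i)) → ℝ := fun s => y s.1 s.2 with hz
  set w : (Σ i, Fin (p i)) → ℝ := M *ᵥ z with hw
  have h := hlmi z
  rw [← Matrix.mulVec_mulVec, ← Matrix.mulVec_mulVec, Matrix.dotProduct_mulVec,
    Matrix.vecMul_transpose, Matrix.fromRows_mulVec, Matrix.one_mulVec] at h
  refine le_trans (le_of_eq ?_) h
  rw [Matrix.fromBlocks_mulVec, sum_elim_dot, dotProduct_add, dotProduct_add,
    bd_dot, bd_dot, bd_dot, bd_dot, ← Finset.sum_add_distrib, ← Finset.sum_add_distrib,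
    ← Finset.sum_add_distrib]
  refine Finset.sum_congr rfl fun i _ => ?_
  rw [Matrix.fromBlocks_mulVec, sum_elim_dot, dotProduct_add, dotProduct_add]
  rfl
end

section
/- Fix N ∈ ℕ with N ≥ 1. For each i ∈ {1, …, N}, let X_i, U_i, W_i = ℝ^{p_i}, and V_i be measurable spaces with X_i ⊆ ℝ^{n_i}, let ρ_i be a probability measure on V_i, let f_i : X_i × U_i × W_i × V_i → X_i be measurable, let h_i : X_i → ℝ^{r_i} be measurable, let X_{0,i}, X_{u,i} ⊆ X_i be measurable sets, and let B_i : X_i → ℝ be measurable and nonnegative. Suppose for each i there are η_i ≥ 0 and a symmetric matrix X̲_i ∈ ℝ^{(p_i+r_i)×(p_i+r_i)} with block partition [[X̲_i^{11}, X̲_i^{12}], [X̲_i^{21}, X̲_i^{22}]] (X̲_i^{11} ∈ ℝ^{p_i×p_i}) such that: (i) B_i(x_i) ≤ η_i for all x_i ∈ X_{0,i}; (ii) B_i(x_i) ≥ 1 for all x_i ∈ X_{u,i}; (iii) for every x_i ∈ X_i there exists ν_i ∈ U_i such that for every w_i ∈ ℝ^{p_i}, ∫_{V_i} B_i(f_i(x_i,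 ν_i, w_i, v)) dρ_i(v) − B_i(x_i) ≤ [w_i; h_i(x_i)]ᵀ X̲_i [w_i; h_i(x_i)]. Let M ∈ ℝ^{p̃×r̃} with p̃ = Σ_i p_i, r̃ = Σ_i r_i, and let X̲^{comp} be the block matrix with blocks given by the block-diagonal arrangements of (X̲_i^{11})_i, (X̲_i^{12})_i, (X̲_i^{21})_i, (X̲_i^{22})_i. Assume Σ_{i=1}^N η_i < N and that [M; I_{r̃}]ᵀ X̲^{comp} [M; I_{r̃}] is negative semidefinite. Define the interconnected map f on X := Π_i X_i by f(x, ν, v) := (f_i(x_i, ν_i, w_i, v_i))_{i=1}^N where [w_1; …; w_N] := M [h_1(x_1); …; h_N(x_N)], and let ρ := ⊗_i ρ_i. Then B(x) := Σ_{i=1}^N B_i(x_i) satisfies: (a) B(x) ≤ η := Σ_i η_i for all x ∈ Π_i X_{0,i}; (b) B(x) ≥ N for all x ∈ Π_i X_{u,i}; (c) N > η; and (d) for every x ∈ X there exists ν = (ν_1, …, ν_N) ∈ Π_i U_i such that ∫ B(f(x, ν, v)) dρ(v) − B(x) ≤ 0. -/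
open Matrix MeasureTheory

lemma aux_blockDiagonal'_mulVec_apply {ι : Type*} [Fintype ι] [DecidableEq ι]
    {m' n' : ι → Type*} [∀ i, Fintype (m' i)] [∀ i, Fintype (n' i)]
    (X : ∀ i, Matrix (m' i) (n' i) ℝ) (b : (Σ i, n' i) → ℝ) (i : ι) (j : m' i) :
    (Matrix.blockDiagonal' X *ᵥ b) ⟨i, j⟩ = (X i *ᵥ fun l => b ⟨i, l⟩) j := by
  rw [mulVec, dotProduct, ← Finset.univ_sigma_univ, Finset.sum_sigma]
  rw [Finset.sum_eq_single i]
  · simp [mulVec, dotProduct, Matrix.blockDiagonal'_apply_eq]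
  · intro k _ hk
    apply Finset.sum_eq_zero
    intro l _
    rw [Matrix.blockDiagonal'_apply_ne _ _ _ (fun h => hk h.symm), zero_mul]
  · simp

lemma aux_dot_blockDiagonal'_mulVec {ι : Type*} [Fintype ι] [DecidableEq ι]
    {m' n' : ι → Type*} [∀ i, Fintype (m' i)] [∀ i, Fintype (n' i)]
    (X : ∀ i, Matrix (m' i) (n' i) ℝ) (a : (Σ i, m' i) → ℝ) (b : (Σ i, n' i) → ℝ) :
    a ⬝ᵥ (Matrix.blockDiagonal' X *ᵥ b)
      = ∑ i, (fun j => a ⟨i, j⟩) ⬝ᵥ (X i *ᵥ fun l => b ⟨i, l⟩) := by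
  rw [dotProduct, ← Finset.univ_sigma_univ, Finset.sum_sigma]
  refine Finset.sum_congr rfl fun i _ => ?_
  refine Finset.sum_congr rfl fun j _ => ?_
  rw [aux_blockDiagonal'_mulVec_apply]

lemma aux_map_eval {ι : Type*} [Fintype ι] {V : ι → Type*} [∀ i, MeasurableSpace (V i)]
    (ρ : ∀ i, Measure (V i)) [∀ i, IsProbabilityMeasure (ρ i)] (i : ι) :
    (Measure.pi ρ).map (fun v : ∀ j, V j => v i) = ρ i := by
  classical
  ext s hs
  rw [Measure.map_apply (measurable_pi_apply i) hs]
  have : (fun v : ∀ j, V j => v i) ⁻¹' s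
      = Set.univ.pi (Function.update (fun j => (Set.univ : Set (V j))) i s) := by
    ext v
    simp only [Set.mem_preimage, Set.mem_pi, Set.mem_univ, forall_true_left]
    constructor
    · intro hv j
      rcases eq_or_ne j i with rfl | hj
      · simpa using hv
      · simp [Function.update_of_ne hj]
    · intro hv
      have := hv i
      simpa using this
  rw [this, Measure.pi_pi]
  rw [Finset.prod_eq_single i]
  · simp
  · intro j _ hj; simp [Function.update_of_ne hj]
  · simp


/-- Theorem 2 of the paper: under the dissipativity-type compositionality conditions
(9)-(10), the sum `B(x) = Σᵢ Bᵢ(xᵢ)` of control sub-barrier certificates of the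
subsystems is a control barrier certificate for the interconnected system, with
constants `η = Σᵢ ηᵢ` and `β = N`. -/
theorem compositional_cbc {N : ℕ} (hN : 1 ≤ N)
    (n p r : Fin N → ℕ)
    (U : Fin N → Type*) [∀ i, MeasurableSpace (U i)]
    (V : Fin N → Type*) [∀ i, MeasurableSpace (V i)]
    (ρ : ∀ i, Measure (V i)) [∀ i, IsProbabilityMeasure (ρ i)]
    (Xs : ∀ i, Set (Fin (n i) → ℝ)) (hXs : ∀ i, MeasurableSet (Xs i))
    (f : ∀ i, (Fin (n i) → ℝ) → U i → (Fin (p i) → ℝ) → V i → (Fin (n i) → ℝ))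
    (hf : ∀ i, Measurable fun q : ((Fin (n i) → ℝ) × U i × (Fin (p i) → ℝ) × V i) =>
      f i q.1 q.2.1 q.2.2.1 q.2.2.2)
    (hfmaps : ∀ i, ∀ x ∈ Xs i, ∀ (u : U i) (w : Fin (p i) → ℝ) (v : V i),
      f i x u w v ∈ Xs i)
    (h : ∀ i, (Fin (n i) → ℝ) → Fin (r i) → ℝ) (hh : ∀ i, Measurable (h i))
    (X0 Xu : ∀ i, Set (Fin (n i) → ℝ))
    (hX0 : ∀ i, MeasurableSet (X0 i)) (hXu : ∀ i, MeasurableSet (Xu i))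
    (hX0sub : ∀ i, X0 i ⊆ Xs i) (hXusub : ∀ i, Xu i ⊆ Xs i)
    (B : ∀ i, (Fin (n i) → ℝ) → ℝ) (hBmeas : ∀ i, Measurable (B i))
    (hBnonneg : ∀ i x, 0 ≤ B i x)
    (η : Fin N → ℝ) (hη : ∀ i, 0 ≤ η i)
    (X11 : ∀ i, Matrix (Fin (p i)) (Fin (p i)) ℝ)
    (X12 : ∀ i, Matrix (Fin (p i)) (Fin (r i)) ℝ)
    (X21 : ∀ i, Matrix (Fin (r i)) (Fin (p i)) ℝ)
    (X22 : ∀ i, Matrix (Fin (r i)) (Fin (r i)) ℝ)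
    (hsymm : ∀ i, (Matrix.fromBlocks (X11 i) (X12 i) (X21 i) (X22 i)).IsSymm)
    -- (i) CSBC initial condition
    (hinit : ∀ i, ∀ x ∈ X0 i, B i x ≤ η i)
    -- (ii) CSBC unsafe condition
    (hunsafe : ∀ i, ∀ x ∈ Xu i, 1 ≤ B i x)
    -- (iii) CSBC dissipativity drift condition
    (hdrift : ∀ i, ∀ x ∈ Xs i, ∃ ν : U i, ∀ w : Fin (p i) → ℝ,
      (∫ v, B i (f i x ν w v) ∂(ρ i)) - B i x ≤
        Sum.elim w (h i x) ⬝ᵥ (Matrix.fromBlocks (X11 i) (X12 i) (X21 i) (X22 i) *ᵥ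
          Sum.elim w (h i x)))
    (M : Matrix (Σ i, Fin (p i)) (Σ i, Fin (r i)) ℝ)
    -- compositionality condition (9)
    (hsum : ∑ i, η i < (N : ℝ))
    -- compositionality LMI condition (10)
    (hlmi : ∀ z : (Σ i, Fin (r i)) → ℝ,
      z ⬝ᵥ (((Matrix.fromRows M (1 : Matrix (Σ i, Fin (r i)) (Σ i, Fin (r i)) ℝ))ᵀ *
          Matrix.fromBlocks (Matrix.blockDiagonal' X11) (Matrix.blockDiagonal' X12)
            (Matrix.blockDiagonal' X21) (Matrix.blockDiagonal' X22) *
          Matrix.fromRows M (1 : Matrix (Σ i, Fin (r i)) (Σ i, Fin (r i)) ℝ)) *ᵥ z) ≤ 0) :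
    -- (a) B ≤ η = Σᵢ ηᵢ on the initial set of the interconnection
    (∀ x ∈ Set.univ.pi X0, ∑ i, B i (x i) ≤ ∑ i, η i) ∧
    -- (b) B ≥ β = N on the unsafe set of the interconnection
    (∀ x ∈ Set.univ.pi Xu, (N : ℝ) ≤ ∑ i, B i (x i)) ∧
    -- (c) β > η
    (∑ i, η i < (N : ℝ)) ∧
    -- (d) supermartingale condition for the interconnected system
    (∀ x ∈ Set.univ.pi Xs, ∃ ν : ∀ i, U i,
      (∫ v : (∀ i, V i), ∑ i, B i
          (f i (x i) (ν i)
            (fun j => (M *ᵥ fun s : Σ i, Fin (r i) => h s.1 (x s.1) s.2) ⟨i, j⟩)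
            (v i)) ∂(Measure.pi ρ))
        - ∑ i, B i (x i) ≤ 0) := by
  classical
  refine ⟨?_, ?_, hsum, ?_⟩
  · intro x hx
    exact Finset.sum_le_sum fun i _ => hinit i (x i) (hx i (Set.mem_univ i))
  · intro x hx
    calc (N : ℝ) = ∑ _i : Fin N, (1 : ℝ) := by simp
    _ ≤ ∑ i, B i (x i) :=
      Finset.sum_le_sum fun i _ => hunsafe i (x i) (hx i (Set.mem_univ i))
  · intro x hx
    choose ν hν using fun i => hdrift i (x i) (hx i (Set.mem_univ i))
    refine ⟨ν, ?_⟩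
    set z : (Σ i, Fin (r i)) → ℝ := fun s => h s.1 (x s.1) s.2 with hzdef
    set W : (Σ i, Fin (p i)) → ℝ := M *ᵥ z with hWdef
    set w : ∀ i, Fin (p i) → ℝ := fun i j => W ⟨i, j⟩ with hwdef
    set g : ∀ i, V i → ℝ := fun i v => B i (f i (x i) (ν i) (w i) v) with hgdef
    have hgmeas : ∀ i, Measurable (g i) := fun i =>
      (hBmeas i).comp ((hf i).comp (measurable_const.prodMk
        (measurable_const.prodMk (measurable_const.prodMk measurable_id))))
    -- the quadratic-form bound
    have expand : ∀ i, Sum.elim (w i) (h i (x i)) ⬝ᵥ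
        (Matrix.fromBlocks (X11 i) (X12 i) (X21 i) (X22 i) *ᵥ Sum.elim (w i) (h i (x i)))
        = (w i) ⬝ᵥ (X11 i *ᵥ w i) + (w i) ⬝ᵥ (X12 i *ᵥ h i (x i))
          + ((h i (x i)) ⬝ᵥ (X21 i *ᵥ w i) + (h i (x i)) ⬝ᵥ (X22 i *ᵥ h i (x i))) := by
      intro i
      rw [Matrix.fromBlocks_mulVec, sumElim_dotProduct_sumElim,
        Sum.elim_comp_inl, Sum.elim_comp_inr, dotProduct_add, dotProduct_add]
    have key : ∑ i, Sum.elim (w i) (h i (x i)) ⬝ᵥ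
        (Matrix.fromBlocks (X11 i) (X12 i) (X21 i) (X22 i) *ᵥ Sum.elim (w i) (h i (x i)))
        = Sum.elim W z ⬝ᵥ (Matrix.fromBlocks (Matrix.blockDiagonal' X11)
            (Matrix.blockDiagonal' X12) (Matrix.blockDiagonal' X21)
            (Matrix.blockDiagonal' X22) *ᵥ Sum.elim W z) := by
      rw [Matrix.fromBlocks_mulVec, sumElim_dotProduct_sumElim,
        Sum.elim_comp_inl, Sum.elim_comp_inr, dotProduct_add, dotProduct_add,
        aux_dot_blockDiagonal'_mulVec, aux_dot_blockDiagonal'_mulVec,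
        aux_dot_blockDiagonal'_mulVec, aux_dot_blockDiagonal'_mulVec,
        ← Finset.sum_add_distrib, ← Finset.sum_add_distrib, ← Finset.sum_add_distrib]
      refine Finset.sum_congr rfl fun i _ => ?_
      rw [expand i]
    have hlmi' := hlmi z
    rw [← Matrix.mulVec_mulVec, ← Matrix.mulVec_mulVec, Matrix.dotProduct_mulVec,
      Matrix.vecMul_transpose, Matrix.fromRows_mulVec, Matrix.one_mulVec] at hlmi'
    have hquad : ∑ i, ((∫ v, g i v ∂(ρ i)) - B i (x i)) ≤ 0 := by
      calc ∑ i, ((∫ v, g i v ∂(ρ i)) - B i (x i))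
          ≤ ∑ i, Sum.elim (w i) (h i (x i)) ⬝ᵥ
            (Matrix.fromBlocks (X11 i) (X12 i) (X21 i) (X22 i) *ᵥ
              Sum.elim (w i) (h i (x i))) :=
            Finset.sum_le_sum fun i _ => hν i (w i)
        _ = Sum.elim W z ⬝ᵥ (Matrix.fromBlocks (Matrix.blockDiagonal' X11)
              (Matrix.blockDiagonal' X12) (Matrix.blockDiagonal' X21)
              (Matrix.blockDiagonal' X22) *ᵥ Sum.elim W z) := key
        _ ≤ 0 := hlmi'
    show (∫ v : ∀ i, V i, ∑ i, g i (v i) ∂(Measure.pi ρ)) - ∑ i, B i (x i) ≤ 0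
    by_cases hint : ∀ i, Integrable (g i) (ρ i)
    · have hInt : ∀ i, Integrable (fun v : ∀ j, V j => g i (v i)) (Measure.pi ρ) := by
        intro i
        have hmap := aux_map_eval ρ i
        have : Integrable (g i ∘ fun v : ∀ j, V j => v i) (Measure.pi ρ) := by
          rw [← integrable_map_measure ?_ (measurable_pi_apply i).aemeasurable]
          · rw [hmap]; exact hint i
          · rw [hmap]; exact (hgmeas i).aestronglyMeasurable
        exact this
      rw [integral_finset_sum _ fun i _ => hInt i]
      have hIeq : ∀ i, (∫ v : ∀ j, V j, g i (v i) ∂(Measure.pi ρ)) = ∫ v, g i v ∂(ρ i) := by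
        intro i
        rw [← aux_map_eval ρ i,
          integral_map (measurable_pi_apply i).aemeasurable
            (by rw [aux_map_eval ρ i]; exact (hgmeas i).aestronglyMeasurable)]
      calc (∑ i, ∫ v : ∀ j, V j, g i (v i) ∂(Measure.pi ρ)) - ∑ i, B i (x i)
          = ∑ i, ((∫ v, g i v ∂(ρ i)) - B i (x i)) := by
            rw [Finset.sum_sub_distrib]
            congr 1
            exact Finset.sum_congr rfl fun i _ => hIeq i
        _ ≤ 0 := hquad
    · push_neg at hint
      obtain ⟨i0, hi0⟩ := hint
      have hFnot : ¬ Integrable (fun v : ∀ j, V j => ∑ i, g i (v i)) (Measure.pi ρ) := by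
        intro hFint
        apply hi0
        have hG : Integrable (fun v : ∀ j, V j => g i0 (v i0)) (Measure.pi ρ) := by
          refine hFint.mono
            ((hgmeas i0).comp (measurable_pi_apply i0)).aestronglyMeasurable
            (ae_of_all _ fun v => ?_)
          rw [Real.norm_eq_abs, Real.norm_eq_abs, abs_of_nonneg (hBnonneg _ _),
            abs_of_nonneg (Finset.sum_nonneg fun i _ => hBnonneg i _)]
          exact Finset.single_le_sum (f := fun i => g i (v i)) (fun i _ => hBnonneg i _) (Finset.mem_univ i0)
        have := (integrable_map_measure
            (by rw [aux_map_eval ρ i0]; exact (hgmeas i0).aestronglyMeasurable)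
            (measurable_pi_apply i0).aemeasurable).mpr hG
        rwa [aux_map_eval ρ i0] at this
      rw [integral_undef hFnot]
      have : (0 : ℝ) ≤ ∑ i, B i (x i) := Finset.sum_nonneg fun i _ => hBnonneg i _
      linarith
end

section
/- Let X be a standard Borel space, let κ be a Markov kernel from X to X, and for a ∈ X let P_a denote the law on the trajectory space X^ℕ of the time-homogeneous Markov chain (x_k)_{k∈ℕ} with x_0 = a and transition kernel κ. Let A, B, C ⊆ X be measurable sets and let p₁, p₂ ∈ [0, 1] be such that P_a{∃ k ∈ ℕ, x_k ∈ B} ≤ p₁ for every a ∈ A, and P_b{∃ k ∈ ℕ with k ≥ 1, x_k ∈ C} ≤ p₂ for every b ∈ B. Then for every a ∈ A, P_a{∃ k ∈ ℕ, ∃ m > k, x_k ∈ B and x_m ∈ C} ≤ p₁ · p₂. -/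
/-! Split the event according to the first time `k` at which the trajectory enters `B`.
Since `P a` starts at `a` and its shift has law `∫ P_y κ(a, dy)`, induction on `k` shows that
first entering `B` at time `k` and visiting `C` afterwards has probability at most `p₂` times
that of first entering `B` at time `k`; at `k = 0` this is the bound on reaching `C` from `B`.
Summing over the disjoint first-entrance events gives at most `p₂ · P_a(reach B) ≤ p₂ · p₁`. -/

open MeasureTheory ProbabilityTheory
open scoped ENNReal

namespace MarkovTrajectory

open Function

variable {X : Type*}

def trajShift (ω : ℕ → X) : ℕ → X := fun n => ω (n + 1)

def firstHitAt (B : Set X) : ℕ → Set (ℕ → X) := disjointed fun n => {ω | ω n ∈ B}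

def visitsAfter (C : Set X) (k : ℕ) : Set (ℕ → X) := {ω | ∃ m, k < m ∧ ω m ∈ C}

lemma firstHitAt_zero (B : Set X) : firstHitAt B 0 = {ω | ω 0 ∈ B} :=
  disjointed_zero _

lemma firstHitAt_succ (B : Set X) (k : ℕ) :
    firstHitAt B (k + 1) = {ω | ω 0 ∈ Bᶜ} ∩ trajShift ⁻¹' firstHitAt B k := by
  ext ω
  simp only [firstHitAt, disjointed_eq_inter_compl, Set.mem_inter_iff, Set.mem_iInter,
    Set.mem_compl_iff, Set.mem_ofPred_eq, Set.mem_preimage, Nat.forall_lt_succ_left]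
  tauto

lemma pairwise_disjoint_firstHitAt (B : Set X) : Pairwise (Disjoint on firstHitAt B) :=
  disjoint_disjointed _

lemma iUnion_firstHitAt (B : Set X) : ⋃ k, firstHitAt B k = {ω | ∃ k, ω k ∈ B} := by
  rw [firstHitAt, iUnion_disjointed, Set.ofPred_exists]

lemma visitsAfter_succ (C : Set X) (k : ℕ) :
    visitsAfter C (k + 1) = trajShift ⁻¹' visitsAfter C k := by
  ext ω
  constructor
  · rintro ⟨_ | m, hkm, hm⟩
    · omega
    · exact ⟨m, by omega, hm⟩
  · rintro ⟨m, hkm, hm⟩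
    exact ⟨m + 1, by omega, hm⟩

lemma setOf_lt_mem_mem_subset_iUnion (B C : Set X) :
    {ω : ℕ → X | ∃ k m, k < m ∧ ω k ∈ B ∧ ω m ∈ C} ⊆ ⋃ k, firstHitAt B k ∩ visitsAfter C k := by
  rintro ω ⟨k, m, hkm, hk, hm⟩
  have hfirst : ω ∈ ⋃ j ∈ Finset.Iic k, firstHitAt B j := by
    rw [firstHitAt, biUnion_Iic_disjointed]
    exact le_partialSups (fun n => {ω : ℕ → X | ω n ∈ B}) k hk
  obtain ⟨j, hjk, hj⟩ := Set.mem_iUnion₂.1 hfirst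
  exact Set.mem_iUnion.2 ⟨j, hj, m, (Finset.mem_Iic.1 hjk).trans_lt hkm, hm⟩

variable [MeasurableSpace X]

lemma measurable_trajShift : Measurable (trajShift (X := X)) :=
  measurable_pi_lambda _ fun n => measurable_pi_apply (n + 1)

lemma measurableSet_firstHitAt {B : Set X} (hB : MeasurableSet B) (k : ℕ) :
    MeasurableSet (firstHitAt B k) :=
  .disjointed (fun n => measurable_pi_apply n hB) k

lemma measurableSet_visitsAfter {C : Set X} (hC : MeasurableSet C) (k : ℕ) :
    MeasurableSet (visitsAfter C k) := by
  simp only [visitsAfter, Set.ofPred_exists, Set.ofPred_and]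
  exact .iUnion fun m => (MeasurableSet.const (k < m)).inter (measurable_pi_apply m hC)

variable {κ : Kernel X X} {P : X → Measure (ℕ → X)}

lemma measure_start_mem
    (hP0 : ∀ a : X, (P a).map (fun ω : ℕ → X => ω 0) = Measure.dirac a)
    {S : Set X} (hS : MeasurableSet S) (a : X) :
    P a {ω | ω 0 ∈ S} = S.indicator 1 a := by
  rw [← Measure.dirac_apply' a hS, ← hP0 a, Measure.map_apply (measurable_pi_apply 0) hS]
  rfl

lemma measure_start_mem_inter
    (hP0 : ∀ a : X, (P a).map (fun ω : ℕ → X => ω 0) = Measure.dirac a)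
    {S : Set X} (hS : MeasurableSet S) (T : Set (ℕ → X)) (a : X) :
    P a ({ω | ω 0 ∈ S} ∩ T) = S.indicator (fun _ => P a T) a := by
  by_cases ha : a ∈ S
  · rw [Set.indicator_of_mem ha, Set.inter_comm, measure_inter_conull]
    exact (measure_start_mem hP0 hS.compl a).trans (Set.indicator_of_notMem (not_not.2 ha) _)
  · rw [Set.indicator_of_notMem ha]
    exact measure_mono_null Set.inter_subset_left (by simpa [ha] using measure_start_mem hP0 hS a)

lemma measure_preimage_trajShift (hPmeas : Measurable P)
    (hPshift : ∀ a : X, (P a).map trajShift = (κ a).bind P)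
    {T : Set (ℕ → X)} (hT : MeasurableSet T) (a : X) :
    P a (trajShift ⁻¹' T) = ∫⁻ y, P y T ∂κ a := by
  rw [← Measure.map_apply measurable_trajShift hT, hPshift,
    Measure.bind_apply hT hPmeas.aemeasurable]

lemma measure_firstHitAt_inter_visitsAfter_le (hPmeas : Measurable P)
    (hP0 : ∀ a : X, (P a).map (fun ω : ℕ → X => ω 0) = Measure.dirac a)
    (hPshift : ∀ a : X, (P a).map trajShift = (κ a).bind P)
    {B C : Set X} (hB : MeasurableSet B) (hC : MeasurableSet C) {p : ℝ≥0∞}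
    (hreach : ∀ b ∈ B, P b (visitsAfter C 0) ≤ p) (k : ℕ) (a : X) :
    P a (firstHitAt B k ∩ visitsAfter C k) ≤ p * P a (firstHitAt B k) := by
  induction k generalizing a with
  | zero =>
    rw [firstHitAt_zero, measure_start_mem_inter hP0 hB, measure_start_mem hP0 hB]
    by_cases ha : a ∈ B <;> simp [ha, hreach a]
  | succ k ih =>
    have hE := (measurableSet_firstHitAt hB k).inter (measurableSet_visitsAfter hC k)
    rw [firstHitAt_succ, visitsAfter_succ, Set.inter_assoc, ← Set.preimage_inter,
      measure_start_mem_inter hP0 hB.compl, measure_start_mem_inter hP0 hB.compl,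
      measure_preimage_trajShift hPmeas hPshift hE,
      measure_preimage_trajShift hPmeas hPshift (measurableSet_firstHitAt hB k),
      ← Set.indicator_const_mul, ← lintegral_const_mul _ ?_]
    · exact Set.indicator_le_indicator (lintegral_mono ih)
    · exact Measure.measurable_measure.1 hPmeas _ (measurableSet_firstHitAt hB k)

end MarkovTrajectory

open MarkovTrajectory in
theorem markov_sequential_reachability_general
    {X : Type*} [MeasurableSpace X]
    (κ : Kernel X X)
    (P : X → Measure (ℕ → X)) (hPmeas : Measurable P)
    (hP0 : ∀ a : X, (P a).map (fun ω : ℕ → X => ω 0) = Measure.dirac a)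
    (hPshift : ∀ a : X, (P a).map (fun (ω : ℕ → X) (n : ℕ) => ω (n + 1)) = (κ a).bind P)
    (A B C : Set X) (hB : MeasurableSet B) (hC : MeasurableSet C)
    (p₁ p₂ : ℝ≥0∞)
    (hreachB : ∀ a ∈ A, P a {ω : ℕ → X | ∃ k : ℕ, ω k ∈ B} ≤ p₁)
    (hreachC : ∀ b ∈ B, P b {ω : ℕ → X | ∃ k : ℕ, 1 ≤ k ∧ ω k ∈ C} ≤ p₂) :
    ∀ a ∈ A, P a {ω : ℕ → X | ∃ k : ℕ, ∃ m : ℕ, k < m ∧ ω k ∈ B ∧ ω m ∈ C} ≤ p₁ * p₂ := by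
  intro a ha
  calc P a {ω : ℕ → X | ∃ k : ℕ, ∃ m : ℕ, k < m ∧ ω k ∈ B ∧ ω m ∈ C}
      ≤ P a (⋃ k, firstHitAt B k ∩ visitsAfter C k) :=
        measure_mono (setOf_lt_mem_mem_subset_iUnion B C)
    _ ≤ ∑' k, P a (firstHitAt B k ∩ visitsAfter C k) := measure_iUnion_le _
    _ ≤ ∑' k, p₂ * P a (firstHitAt B k) := ENNReal.tsum_le_tsum fun k =>
        -- `1 ≤ k` and `0 < k` are definitionally equal, so `hreachC` bounds `visitsAfter C 0`
        measure_firstHitAt_inter_visitsAfter_le hPmeas hP0 hPshift hB hC hreachC k a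
    _ = p₂ * P a {ω : ℕ → X | ∃ k : ℕ, ω k ∈ B} := by
        rw [ENNReal.tsum_mul_left, ← measure_iUnion (pairwise_disjoint_firstHitAt B)
          (measurableSet_firstHitAt hB), iUnion_firstHitAt]
    _ ≤ p₂ * p₁ := by gcongr; exact hreachB a ha
    _ = p₁ * p₂ := mul_comm _ _

/-- Product rule for sequential reachability probabilities (the probabilistic content
of Theorem 3 of the paper): for a time-homogeneous Markov chain with transition kernel
`κ` on a standard Borel space, if from every point of `A` the chain reaches `B` with
probability at most `p₁` and from every point of `B` it reaches `C` (in at least one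
step) with probability at most `p₂`, then from every point of `A` the probability of
visiting `B` and strictly afterwards `C` is at most `p₁ * p₂`.  The family `a ↦ P a`
of trajectory laws is characterized by: the chain starts at `a` (`hP0`) and the law of
the shifted trajectory is `∫ P_y κ(a, dy)` (`hPshift`). -/
theorem markov_sequential_reachability
    {X : Type*} [MeasurableSpace X] [StandardBorelSpace X]
    (κ : Kernel X X) [IsMarkovKernel κ]
    (P : X → Measure (ℕ → X)) (hPmeas : Measurable P)
    (hPprob : ∀ a, IsProbabilityMeasure (P a))
    (hP0 : ∀ a : X, (P a).map (fun ω : ℕ → X => ω 0) = Measure.dirac a)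
    (hPshift : ∀ a : X, (P a).map (fun (ω : ℕ → X) (n : ℕ) => ω (n + 1)) = (κ a).bind P)
    (A B C : Set X) (hA : MeasurableSet A) (hB : MeasurableSet B) (hC : MeasurableSet C)
    (p₁ p₂ : ℝ≥0∞) (hp₁ : p₁ ≤ 1) (hp₂ : p₂ ≤ 1)
    (hreachB : ∀ a ∈ A, P a {ω : ℕ → X | ∃ k : ℕ, ω k ∈ B} ≤ p₁)
    (hreachC : ∀ b ∈ B, P b {ω : ℕ → X | ∃ k : ℕ, 1 ≤ k ∧ ω k ∈ C} ≤ p₂) :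
    ∀ a ∈ A, P a {ω : ℕ → X | ∃ k : ℕ, ∃ m : ℕ, k < m ∧ ω k ∈ B ∧ ω m ∈ C} ≤ p₁ * p₂ :=
  markov_sequential_reachability_general κ P hPmeas hP0 hPshift A B C hB hC p₁ p₂ hreachB hreachC
end
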